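/- The fractional derivative of a convolution: for 0 < α < 1, u in the range J^α(L²(0,T)) and g ∈ L¹(0,T), the convolution u*g lies in J^α(L²(0,T)) and (J^α)^{-1}(u*g) = ((J^α)^{-1}u) * g, where (u*g)(t) = ∫₀ᵗ u(t−s)g(s) ds. -/

import Mathlib

/-! Extend `w`, `g` and the kernel `r ^ (α - 1)` by zero outside `(0, T)`. All three vanish on
`(-∞, 0]`, so at every `t ∈ (0, T)` both truncated convolutions and `J α` are convolutions on `ℝ`.
Then `conv w g ∈ L²` is Young's inequality `L² ⋆ L¹ ⊆ L²`, and the identity is the associativity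
`(k ⋆ w) ⋆ g = k ⋆ (w ⋆ g)` of convolution of integrable functions. -/

open MeasureTheory Real Set Filter

/-- Riemann–Liouville fractional integral. -/
noncomputable def J (α : ℝ) (v : ℝ → ℝ) (t : ℝ) : ℝ :=
  (1 / Real.Gamma α) * ∫ s in (0:ℝ)..t, (t - s) ^ (α - 1) * v s

/-- Truncated convolution on (0,t). -/
noncomputable def conv (u g : ℝ → ℝ) (t : ℝ) : ℝ :=
  ∫ s in (0:ℝ)..t, u (t - s) * g s

open Function ContinuousLinearMap
open scoped Convolution ENNReal

theorem ENNReal.sq_lintegral_mul_le {α : Type*} [MeasurableSpace α] {μ : Measure α} {φ w : α → ℝ≥0∞}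
    (hφ : AEMeasurable φ μ) (hw : AEMeasurable w μ) :
    (∫⁻ a, φ a * w a ∂μ) ^ 2 ≤ (∫⁻ a, φ a ^ 2 * w a ∂μ) * ∫⁻ a, w a ∂μ := by
  have hsplit : ∀ a, φ a * w a = (φ a ^ 2 * w a) ^ ((2:ℕ)⁻¹ : ℝ) * w a ^ ((2:ℕ)⁻¹ : ℝ) := by
    intro a
    rw [← ENNReal.mul_rpow_of_nonneg _ _ (by positivity), mul_assoc, ← sq, ← mul_pow,
      ENNReal.pow_rpow_inv_natCast two_ne_zero]
  have holder := ENNReal.lintegral_mul_norm_pow_le ((hφ.pow_const 2).mul hw) hw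
    (p := (2:ℕ)⁻¹) (q := (2:ℕ)⁻¹) (by positivity) (by positivity) (by norm_num)
  simp only [← hsplit, Pi.mul_apply] at holder
  calc (∫⁻ a, φ a * w a ∂μ) ^ 2
      ≤ ((∫⁻ a, φ a ^ 2 * w a ∂μ) ^ ((2:ℕ)⁻¹ : ℝ) * (∫⁻ a, w a ∂μ) ^ ((2:ℕ)⁻¹ : ℝ)) ^ 2 := by
        gcongr
    _ = (∫⁻ a, φ a ^ 2 * w a ∂μ) * ∫⁻ a, w a ∂μ := by
        rw [mul_pow, ENNReal.rpow_inv_natCast_pow two_ne_zero,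
          ENNReal.rpow_inv_natCast_pow two_ne_zero]

section Convolution

variable {G : Type*} [MeasurableSpace G] [AddCommGroup G] {μ : Measure G}
  {𝕜 E E' F : Type*} [RCLike 𝕜] [NormedAddCommGroup E] [NormedAddCommGroup E']
  [NormedAddCommGroup F] [NormedSpace 𝕜 E] [NormedSpace 𝕜 E'] [NormedSpace 𝕜 F] [NormedSpace ℝ F]

theorem enorm_convolution_le (L : E →L[𝕜] E' →L[𝕜] F) (f : G → E) (g : G → E') (t : G) :
    ‖(f ⋆[L, μ] g) t‖ₑ ≤ ‖L‖ₑ * ∫⁻ s, ‖f s‖ₑ * ‖g (t - s)‖ₑ ∂μ := by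
  rw [convolution_def, ← lintegral_const_mul' _ _ enorm_ne_top]
  refine (enorm_integral_le_lintegral_enorm _).trans (lintegral_mono fun s => ?_)
  rw [← mul_assoc]
  exact L.le_opENorm₂ _ _

variable [MeasurableAdd₂ G] [MeasurableNeg G] [SFinite μ] [μ.IsAddLeftInvariant]

theorem convolution_assoc_ae_of_integrable {f g k : G → ℝ} (hf : Integrable f μ)
    (hg : Integrable g μ) (hk : Integrable k μ) :
    (f ⋆[lsmul ℝ ℝ, μ] g) ⋆[lsmul ℝ ℝ, μ] k =ᵐ[μ] f ⋆[lsmul ℝ ℝ, μ] (g ⋆[lsmul ℝ ℝ, μ] k) := by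
  have hgk : Integrable ((fun x => ‖g x‖) ⋆[mul ℝ ℝ, μ] fun x => ‖k x‖) μ :=
    hg.norm.integrable_convolution _ hk.norm
  filter_upwards [hf.norm.ae_convolution_exists (mul ℝ ℝ) hgk] with t ht
  exact convolution_assoc _ _ _ _ (fun x y z => smul_assoc x y z) hf.1 hg.1 hk.1
    (hf.ae_convolution_exists _ hg) (hg.norm.ae_convolution_exists _ hk.norm) ht

variable [μ.IsNegInvariant]

theorem lintegral_sq_lintegral_mul_sub_le {φ γ : G → ℝ≥0∞} (hφ : AEMeasurable φ μ)
    (hγ : AEMeasurable γ μ) :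
    ∫⁻ t, (∫⁻ s, φ s * γ (t - s) ∂μ) ^ 2 ∂μ ≤ (∫⁻ s, φ s ^ 2 ∂μ) * (∫⁻ s, γ s ∂μ) ^ 2 := by
  have hintegrand : AEMeasurable (fun p : G × G => φ p.2 ^ 2 * γ (p.1 - p.2)) (μ.prod μ) :=
    (hφ.pow_const 2).comp_snd.mul
      (hγ.comp_quasiMeasurePreserving (quasiMeasurePreserving_sub_of_right_invariant μ μ))
  calc ∫⁻ t, (∫⁻ s, φ s * γ (t - s) ∂μ) ^ 2 ∂μ
      ≤ ∫⁻ t, (∫⁻ s, φ s ^ 2 * γ (t - s) ∂μ) * ∫⁻ s, γ s ∂μ ∂μ := by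
        refine lintegral_mono fun t => ?_
        rw [← lintegral_sub_left_eq_self γ t]
        exact ENNReal.sq_lintegral_mul_le hφ
          (hγ.comp_quasiMeasurePreserving (quasiMeasurePreserving_sub_left_of_right_invariant μ t))
    _ = (∫⁻ s, ∫⁻ t, φ s ^ 2 * γ (t - s) ∂μ ∂μ) * ∫⁻ s, γ s ∂μ := by
        rw [lintegral_mul_const'' _ hintegrand.lintegral_prod_right',
          lintegral_lintegral_swap hintegrand]
    _ = (∫⁻ s, φ s ^ 2 * ∫⁻ t, γ t ∂μ ∂μ) * ∫⁻ s, γ s ∂μ := by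
        congr 1
        refine lintegral_congr fun s => ?_
        rw [lintegral_sub_right_eq_self (fun t => φ s ^ 2 * γ t) s, lintegral_const_mul'' _ hγ]
    _ = (∫⁻ s, φ s ^ 2 ∂μ) * (∫⁻ s, γ s ∂μ) ^ 2 := by
        rw [lintegral_mul_const'' _ (hφ.pow_const 2), sq, mul_assoc]

theorem MeasureTheory.MemLp.convolution_of_integrable (L : E →L[𝕜] E' →L[𝕜] F) {f : G → E}
    {g : G → E'} (hf : MemLp f 2 μ) (hg : Integrable g μ) : MemLp (f ⋆[L, μ] g) 2 μ := by
  have hf2 : ∫⁻ s, ‖f s‖ₑ ^ 2 ∂μ < ⊤ := by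
    simpa [eLpNorm_lt_top_iff_lintegral_rpow_enorm_lt_top two_ne_zero ENNReal.ofNat_ne_top]
      using hf.eLpNorm_lt_top
  refine ⟨(hf.1.convolution_integrand L hg.1).integral_prod_right', ?_⟩
  rw [eLpNorm_lt_top_iff_lintegral_rpow_enorm_lt_top two_ne_zero ENNReal.ofNat_ne_top]
  simp only [ENNReal.toReal_ofNat, ENNReal.rpow_two]
  calc ∫⁻ t, ‖(f ⋆[L, μ] g) t‖ₑ ^ 2 ∂μ
      ≤ ∫⁻ t, ‖L‖ₑ ^ 2 * (∫⁻ s, ‖f s‖ₑ * ‖g (t - s)‖ₑ ∂μ) ^ 2 ∂μ :=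
        lintegral_mono fun t => by rw [← mul_pow]; gcongr; exact enorm_convolution_le L f g t
    _ ≤ ‖L‖ₑ ^ 2 * ((∫⁻ s, ‖f s‖ₑ ^ 2 ∂μ) * (∫⁻ s, ‖g s‖ₑ ∂μ) ^ 2) := by
        rw [lintegral_const_mul' _ _ (by simp)]
        gcongr
        exact lintegral_sq_lintegral_mul_sub_le hf.1.enorm hg.1.enorm
    _ < ⊤ := by
        have hg1 : ∫⁻ s, ‖g s‖ₑ ∂μ < ⊤ := hg.2
        finiteness

end Convolution

theorem conv_congr {a b A B : ℝ → ℝ} {t : ℝ} (ht : 0 ≤ t) (ha : EqOn a A (Ioo 0 t))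
    (hb : EqOn b B (Ioo 0 t)) : conv a b t = conv A B t := by
  simp only [conv, intervalIntegral.integral_of_le ht, integral_Ioc_eq_integral_Ioo]
  refine setIntegral_congr_fun measurableSet_Ioo fun s hs => ?_
  have hts : t - s ∈ Ioo 0 t := ⟨sub_pos.mpr hs.2, sub_lt_self t hs.1⟩
  simp only [ha hts, hb hs]

theorem conv_eq_convolution {a b A B : ℝ → ℝ} (hA : support A ⊆ Ioi 0)
    (hB : support B ⊆ Ioi 0) {t : ℝ} (ha : EqOn a A (Ioo 0 t)) (hb : EqOn b B (Ioo 0 t))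
    (ht : 0 < t) : conv a b t = (A ⋆ B) t := by
  have hpos := congr_fun (posConvolution_eq_convolution_indicator A B (lsmul ℝ ℝ)) t
  rw [indicator_eq_self.mpr hA, indicator_eq_self.mpr hB, posConvolution,
    indicator_of_mem (mem_Ioi.mpr ht)] at hpos
  have hreflect := intervalIntegral.integral_comp_sub_left (a := 0) (b := t)
    (fun s => A s * B (t - s)) t
  simp only [sub_self, sub_zero, sub_sub_cancel] at hreflect
  rw [← hpos, conv_congr ht.le ha hb, conv, hreflect]
  rfl

theorem support_convolution_subset_Ioi {A B : ℝ → ℝ} (hA : support A ⊆ Ioi 0)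
    (hB : support B ⊆ Ioi 0) : support (A ⋆ B) ⊆ Ioi 0 :=
  (support_convolution_subset _).trans <| (add_subset_add hA hB).trans <| by
    rintro _ ⟨x, hx, y, hy, rfl⟩
    exact mem_Ioi.mpr (add_pos hx hy)

theorem support_indicator_Ioo_subset_Ioi (f : ℝ → ℝ) (T : ℝ) :
    support ((Ioo 0 T).indicator f) ⊆ Ioi 0 :=
  support_indicator_subset.trans Ioo_subset_Ioi_self

theorem eqOn_indicator_Ioo {f : ℝ → ℝ} {t T : ℝ} (htT : t ≤ T) :
    EqOn f ((Ioo 0 T).indicator f) (Ioo 0 t) := fun s hs =>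
  (indicator_of_mem (show s ∈ Ioo 0 T from ⟨hs.1, hs.2.trans_le htT⟩) f).symm

/-- The Abel kernel `r ^ (α - 1)` of `J α`, cut off outside `(0, T)` so that it is integrable. -/
noncomputable def abelKernel (α T : ℝ) : ℝ → ℝ := (Ioo 0 T).indicator fun r => r ^ (α - 1)

theorem integrable_abelKernel {α : ℝ} (hα : 0 < α) (T : ℝ) : Integrable (abelKernel α T) := by
  refine (integrable_indicator_iff measurableSet_Ioo).mpr ?_
  rcases le_or_gt T 0 with hT | hT
  · simp [Ioo_eq_empty_of_le hT]
  exact (intervalIntegral.intervalIntegrable_rpow' (a := 0) (b := T) (by linarith)).1.mono_set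
    Ioo_subset_Ioc_self

theorem J_eq_convolution {α T t : ℝ} {v V : ℝ → ℝ} (hV : support V ⊆ Ioi 0)
    (hv : EqOn v V (Ioo 0 t)) (ht : t ∈ Ioc 0 T) :
    J α v t = (Real.Gamma α)⁻¹ * (abelKernel α T ⋆ V) t := by
  rw [abelKernel, ← conv_eq_convolution (support_indicator_Ioo_subset_Ioi _ _) hV
    (eqOn_indicator_Ioo ht.2) hv ht.1, J, one_div]
  rfl

theorem fractional_derivative_of_convolution_general
    (T α : ℝ) (hα : 0 < α)
    (u w g : ℝ → ℝ)
    (hw : MemLp w 2 (volume.restrict (Set.Ioo 0 T)))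
    (hg : IntegrableOn g (Set.Ioo 0 T))
    (hu : ∀ t ∈ Set.Ioo (0:ℝ) T, u t = J α w t) :
    MemLp (conv w g) 2 (volume.restrict (Set.Ioo 0 T)) ∧
      ∀ᵐ t ∂(volume.restrict (Set.Ioo 0 T)), conv u g t = J α (conv w g) t := by
  set W := (Ioo 0 T).indicator w
  set G := (Ioo 0 T).indicator g
  set K := abelKernel α T
  have hW_L2 : MemLp W 2 volume := (memLp_indicator_iff_restrict measurableSet_Ioo).mpr hw
  have hW_L1 : Integrable W :=
    (integrable_indicator_iff measurableSet_Ioo).mpr (hw.integrable one_le_two)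
  have hG : Integrable G := (integrable_indicator_iff measurableSet_Ioo).mpr hg
  have hW_supp := support_indicator_Ioo_subset_Ioi w T
  have hG_supp := support_indicator_Ioo_subset_Ioi g T
  have hWG_supp := support_convolution_subset_Ioi hW_supp hG_supp
  have hconv : ∀ t ∈ Ioo 0 T, conv w g t = (W ⋆ G) t := fun t ht =>
    conv_eq_convolution hW_supp hG_supp (eqOn_indicator_Ioo ht.2.le) (eqOn_indicator_Ioo ht.2.le)
      ht.1
  have hu_conv : ∀ t ∈ Ioo 0 T, u t = (Real.Gamma α)⁻¹ * (K ⋆ W) t := fun t ht =>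
    (hu t ht).trans (J_eq_convolution hW_supp (eqOn_indicator_Ioo ht.2.le) ⟨ht.1, ht.2.le⟩)
  refine ⟨((hW_L2.convolution_of_integrable (lsmul ℝ ℝ) hG).restrict _).ae_eq ?_, ?_⟩
  · exact (ae_restrict_iff' measurableSet_Ioo).mpr (.of_forall fun t ht => (hconv t ht).symm)
  have hassoc := convolution_assoc_ae_of_integrable (integrable_abelKernel hα T) hW_L1 hG
  filter_upwards [ae_restrict_of_ae hassoc, ae_restrict_mem measurableSet_Ioo] with t hKWG ht
  calc conv u g t = ((Real.Gamma α)⁻¹ • (K ⋆ W) ⋆ G) t :=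
        conv_eq_convolution
          (support_smul_subset_right _ _ |>.trans (support_convolution_subset_Ioi
            (support_indicator_Ioo_subset_Ioi _ _) hW_supp)) hG_supp
          (fun s hs => hu_conv s ⟨hs.1, hs.2.trans ht.2⟩) (eqOn_indicator_Ioo ht.2.le) ht.1
    _ = (Real.Gamma α)⁻¹ * (K ⋆ (W ⋆ G)) t := by
        rw [smul_convolution, Pi.smul_apply, hKWG, smul_eq_mul]
    _ = J α (conv w g) t :=
        (J_eq_convolution hWG_supp (fun s hs => hconv s ⟨hs.1, hs.2.trans ht.2⟩)
          ⟨ht.1, ht.2.le⟩).symm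

theorem fractional_derivative_of_convolution
    (T α : ℝ) (hT : 0 < T) (hα : 0 < α) (hα1 : α < 1)
    (u w g : ℝ → ℝ)
    (hw : MemLp w 2 (volume.restrict (Set.Ioo 0 T)))
    (hg : IntegrableOn g (Set.Ioo 0 T))
    (hu : ∀ t ∈ Set.Ioo (0:ℝ) T, u t = J α w t) :
    MemLp (conv w g) 2 (volume.restrict (Set.Ioo 0 T)) ∧
      ∀ᵐ t ∂(volume.restrict (Set.Ioo 0 T)), conv u g t = J α (conv w g) t :=
  fractional_derivative_of_convolution_general T α hα u w g hw hg hu
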